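/- arXiv:2405.06420 — 8 statements merged into one kernel-verified Lean document; each statement's English description precedes it below -/
import Mathlib

section
/- For every function f : ℝ → ℝ there exist graph continuous functions g, h : ℝ → ℝ such that f = g + h. -/
/-- A function `f : ℝ → ℝ` is *graph continuous* if there is a continuous
`g : ℝ → ℝ` whose graph is contained in the closure of the graph of `f`. -/
def GraphContinuous (f : ℝ → ℝ) : Prop :=
  ∃ g : ℝ → ℝ, Continuous g ∧
    {p : ℝ × ℝ | p.2 = g p.1} ⊆ closure {p : ℝ × ℝ | p.2 = f p.1}

/-! Split `f` into its restrictions to the rationals and to the irrationals (extended by zero).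
Each part vanishes on a dense set, so the zero function has its graph in the closure of the
graph of each part. -/

open Set

theorem GraphContinuous.of_eqOn_dense {f g : ℝ → ℝ} {D : Set ℝ} (hg : Continuous g)
    (hD : Dense D) (hfg : EqOn f g D) : GraphContinuous f := by
  refine ⟨g, hg, ?_⟩
  have hgraph : Continuous fun x => (x, g x) := continuous_id.prodMk hg
  rintro ⟨x, y⟩ (rfl : y = g x)
  have hsub : (fun x => (x, g x)) '' D ⊆ {p : ℝ × ℝ | p.2 = f p.1} := by
    rintro _ ⟨z, hz, rfl⟩
    exact (hfg hz).symm
  exact closure_mono hsub <|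
    image_closure_subset_closure_image hgraph ⟨x, hD.closure_eq ▸ mem_univ x, rfl⟩

theorem graphContinuous_indicator_of_dense_compl {s : Set ℝ} (hs : Dense sᶜ) (f : ℝ → ℝ) :
    GraphContinuous (s.indicator f) :=
  .of_eqOn_dense continuous_const hs fun _ hx => indicator_of_notMem hx f

theorem every_function_sum_of_two_graph_continuous (f : ℝ → ℝ) :
    ∃ g h : ℝ → ℝ, GraphContinuous g ∧ GraphContinuous h ∧ f = g + h := by
  set Q : Set ℝ := range ((↑) : ℚ → ℝ)
  have hirrational : Dense Qᶜ := dense_irrational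
  have hrational : Dense Qᶜᶜ := by rw [compl_compl]; exact Rat.denseRange_cast
  exact ⟨Q.indicator f, Qᶜ.indicator f,
    graphContinuous_indicator_of_dense_compl hirrational f,
    graphContinuous_indicator_of_dense_compl hrational f,
    (indicator_self_add_compl Q f).symm⟩
end

section
/- A function f : ℝ → ℝ is continuous if and only if f is both quasi-continuous and graph continuous. -/
/-- Quasi-continuity. -/
def QuasiContinuous (f : ℝ → ℝ) : Prop :=
  ∀ x : ℝ, ∀ ε : ℝ, 0 < ε → ∀ U : Set ℝ, IsOpen U → x ∈ U →
    ∃ a b : ℝ, a < b ∧ Set.Ioo a b ⊆ U ∧ ∀ y ∈ Set.Ioo a b, |f x - f y| < ε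

theorem continuous_iff_quasi_and_graph_continuous (f : ℝ → ℝ) :
    Continuous f ↔ QuasiContinuous f ∧ GraphContinuous f := by
  constructor
  · intro hf
    refine ⟨?_, f, hf, subset_closure⟩
    intro x ε hε U hU hxU
    have h1 : IsOpen (U ∩ f ⁻¹' Metric.ball (f x) ε) :=
      hU.inter (Metric.isOpen_ball.preimage hf)
    have hx : x ∈ U ∩ f ⁻¹' Metric.ball (f x) ε :=
      ⟨hxU, by simpa using hε⟩
    obtain ⟨δ, hδ, hball⟩ := Metric.isOpen_iff.mp h1 x hx
    refine ⟨x - δ, x + δ, by linarith, ?_, ?_⟩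
    · intro y hy
      have hyb : y ∈ Metric.ball x δ := by
        rw [Real.ball_eq_Ioo]; exact hy
      exact (hball hyb).1
    · intro y hy
      have hyb : y ∈ Metric.ball x δ := by
        rw [Real.ball_eq_Ioo]; exact hy
      have := (hball hyb).2
      simp only [Set.mem_preimage, Metric.mem_ball, Real.dist_eq] at this
      rw [abs_sub_comm]
      exact this
  · rintro ⟨hq, g, hg, hsub⟩
    have hfg : f = g := by
      funext x
      by_contra hne
      set ε := |f x - g x| / 3 with hεdef
      have habs : 0 < |f x - g x| := abs_pos.mpr (sub_ne_zero.mpr hne)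
      have hεpos : 0 < ε := by positivity
      obtain ⟨δ, hδ, hgd⟩ := Metric.continuousAt_iff.mp hg.continuousAt ε hεpos
      obtain ⟨a, b, hab, hsubU, hfx⟩ := hq x ε hεpos (Metric.ball x δ)
        Metric.isOpen_ball (Metric.mem_ball_self hδ)
      set y := (a + b) / 2 with hydef
      have hy : y ∈ Set.Ioo a b := ⟨by rw [hydef]; linarith, by rw [hydef]; linarith⟩
      have hclose : ((y, g y) : ℝ × ℝ) ∈ closure {p : ℝ × ℝ | p.2 = f p.1} :=
        hsub rfl
      rw [Metric.mem_closure_iff] at hclose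
      have hya : 0 < y - a := by linarith [hy.1]
      have hyb : 0 < b - y := by linarith [hy.2]
      set r := min ε (min (y - a) (b - y)) with hrdef
      have hr : 0 < r := lt_min hεpos (lt_min hya hyb)
      obtain ⟨q, hq2, hdist⟩ := hclose r hr
      rw [Prod.dist_eq, max_lt_iff] at hdist
      have hd1 : |y - q.1| < y - a :=
        lt_of_lt_of_le (by rw [← Real.dist_eq]; exact hdist.1)
          (le_trans (min_le_right _ _) (min_le_left _ _))
      have hd1' : |y - q.1| < b - y :=
        lt_of_lt_of_le (by rw [← Real.dist_eq]; exact hdist.1)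
          (le_trans (min_le_right _ _) (min_le_right _ _))
      have hz : q.1 ∈ Set.Ioo a b := by
        rcases abs_lt.mp hd1 with ⟨h1, _⟩
        rcases abs_lt.mp hd1' with ⟨h3, _⟩
        constructor <;> linarith [abs_lt.mp hd1, abs_lt.mp hd1']
      -- |f x - f q.1| < ε
      have e1 : |f x - f q.1| < ε := hfx q.1 hz
      -- |f q.1 - g y| < ε
      have e2 : |f q.1 - g y| < ε := by
        have h2 : dist (g y) q.2 < ε :=
          lt_of_lt_of_le hdist.2 (le_trans (min_le_left _ _) le_rfl)
        rw [hq2, Real.dist_eq, abs_sub_comm] at h2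
        exact h2
      -- |g y - g x| < ε
      have e3 : |g y - g x| < ε := by
        have hyball : y ∈ Metric.ball x δ := hsubU hy
        have := hgd (by rwa [Metric.mem_ball] at hyball)
        rwa [Real.dist_eq] at this
      have : |f x - g x| ≤ |f x - f q.1| + |f q.1 - g y| + |g y - g x| := by
        calc |f x - g x| = |(f x - f q.1) + (f q.1 - g y) + (g y - g x)| := by ring_nf
          _ ≤ |f x - f q.1| + |f q.1 - g y| + |g y - g x| := by
              exact (abs_add_le _ _).trans (add_le_add_left (abs_add_le _ _) _)
      have : |f x - g x| < 3 * ε := by linarith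
      rw [hεdef] at this
      linarith
    rw [hfg]; exact hg
end

section
/- Let f : ℝ → ℝ be quasi-continuous and let g : ℝ → ℝ be continuous such that the graph {(x, g x) : x ∈ ℝ} of g is contained in the closure (in ℝ × ℝ) of the graph {(x, f x) : x ∈ ℝ} of f. Then f(x) = g(x) for every x ∈ ℝ. -/
theorem quasiContinuous_graph_witness_eq (f g : ℝ → ℝ)
    (hf : QuasiContinuous f) (hg : Continuous g)
    (hgraph : {p : ℝ × ℝ | p.2 = g p.1} ⊆ closure {p : ℝ × ℝ | p.2 = f p.1}) :
    ∀ x : ℝ, f x = g x := by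
  intro x
  by_contra hne
  set ε := |f x - g x| / 3 with hε
  have hεpos : 0 < ε := by
    have : 0 < |f x - g x| := abs_pos.mpr (sub_ne_zero.mpr hne)
    positivity
  -- U = preimage of ball around g x
  have hUopen : IsOpen (g ⁻¹' Metric.ball (g x) ε) := (Metric.isOpen_ball).preimage hg
  have hxU : x ∈ g ⁻¹' Metric.ball (g x) ε := by
    simp [Metric.mem_ball, hεpos]
  obtain ⟨a, b, hab, hUsub, hfsmall⟩ := hf x ε hεpos _ hUopen hxU
  set y := (a + b) / 2 with hy
  have hyI : y ∈ Set.Ioo a b := ⟨by linarith, by linarith⟩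
  have hyU : y ∈ g ⁻¹' Metric.ball (g x) ε := hUsub hyI
  have hgy : |g y - g x| < ε := by
    simpa [Real.dist_eq] using hyU
  -- (y, g y) is in closure of graph of f
  have hcl : (y, g y) ∈ closure {p : ℝ × ℝ | p.2 = f p.1} := hgraph rfl
  have hVopen : IsOpen (Set.Ioo a b ×ˢ Metric.ball (g y) ε) :=
    isOpen_Ioo.prod Metric.isOpen_ball
  have hyV : (y, g y) ∈ Set.Ioo a b ×ˢ Metric.ball (g y) ε :=
    ⟨hyI, by simp [hεpos]⟩
  obtain ⟨p, hpV, hpf⟩ := (_root_.mem_closure_iff.mp hcl) _ hVopen hyV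
  have hp1 : p.1 ∈ Set.Ioo a b := hpV.1
  have hp2 : |f p.1 - g y| < ε := by
    have := hpV.2
    rw [Metric.mem_ball, Real.dist_eq] at this
    rwa [← hpf]
  have h1 : |f x - f p.1| < ε := hfsmall p.1 hp1
  have : |f x - g x| < 3 * ε := by
    calc |f x - g x| = |(f x - f p.1) + (f p.1 - g y) + (g y - g x)| := by ring_nf
      _ ≤ |f x - f p.1| + |f p.1 - g y| + |g y - g x| := by
          exact (abs_add_le _ _).trans (add_le_add_left (abs_add_le _ _) _)
      _ < ε + ε + ε := by linarith
      _ = 3 * ε := by ring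
  rw [hε] at this
  linarith
end

section
/- Let f : ℝ → ℝ be s-continuous on [0,1], i.e. for every open G ⊆ ℝ the set {x ∈ [0,1] : f(x) ∈ G} is semi-open in the subspace topology of [0,1]. Then for every real q: there exists x ∈ [0,1] with f(x) > q if and only if there exists a rational r ∈ [0,1] with f(r) > q. -/
/-!
Apply semi-openness to `G = (q, ∞)`: if `f x > q` for some `x ∈ [0,1]`, the set
`{f > q}` is nonempty and contained in the closure of its interior, so it has nonempty
interior in `[0,1]`. Since `[0,1]` is the closure of its interior in `ℝ`, the rationals stay
dense in the subspace `[0,1]`, so this interior contains a rational point.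
-/

open Set

variable {X : Type*} [TopologicalSpace X] {s D : Set X}

theorem Dense.inter_nonempty_of_subset_closure_interior (hD : Dense D)
    (hs : s ⊆ closure (interior s)) (hne : s.Nonempty) : (s ∩ D).Nonempty := by
  have hint : (interior s).Nonempty := by
    obtain ⟨x, hx⟩ := hne
    exact closure_nonempty_iff.mp ⟨x, hs hx⟩
  exact (hD.inter_open_nonempty _ isOpen_interior hint).mono
    (inter_subset_inter_left _ interior_subset)

theorem Dense.preimage_val_of_subset_closure_interior (hD : Dense D)
    (hs : s ⊆ closure (interior s)) : Dense ((↑) ⁻¹' D : Set s) := by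
  refine dense_iff_inter_open.mpr fun U hU ⟨⟨x, hxs⟩, hxU⟩ => ?_
  obtain ⟨V, hV, rfl⟩ := isOpen_induced_iff.mp hU
  obtain ⟨y, hyV, hys⟩ := mem_closure_iff.mp (hs hxs) V hV hxU
  obtain ⟨z, ⟨hzV, hzs⟩, hzD⟩ := hD.inter_open_nonempty _ (hV.inter isOpen_interior) ⟨y, hyV, hys⟩
  exact ⟨⟨z, interior_subset hzs⟩, hzV, hzD⟩

theorem dense_range_ratCast_Icc {a b : ℝ} (hab : a ≠ b) :
    Dense {x : Icc a b | (x : ℝ) ∈ range ((↑) : ℚ → ℝ)} :=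
  Rat.denseRange_cast.preimage_val_of_subset_closure_interior (closure_interior_Icc hab).superset

theorem sContinuous_sup_rational (f : ℝ → ℝ)
    (hf : ∀ G : Set ℝ, IsOpen G →
      ({x : Set.Icc (0:ℝ) 1 | f ↑x ∈ G} : Set (Set.Icc (0:ℝ) 1)) ⊆
        closure (interior {x : Set.Icc (0:ℝ) 1 | f ↑x ∈ G})) :
    ∀ q : ℝ, (∃ x ∈ Set.Icc (0:ℝ) 1, f x > q) ↔
      (∃ r : ℚ, (r : ℝ) ∈ Set.Icc (0:ℝ) 1 ∧ f r > q) := by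
  intro q
  refine ⟨fun ⟨x, hx, hfx⟩ => ?_, fun ⟨r, hr, hfr⟩ => ⟨r, hr, hfr⟩⟩
  obtain ⟨⟨y, hy⟩, hfy, r, rfl⟩ :=
    (dense_range_ratCast_Icc zero_ne_one).inter_nonempty_of_subset_closure_interior
      (hf (Ioi q) isOpen_Ioi) ⟨⟨x, hx⟩, hfx⟩
  exact ⟨r, hy, hfy⟩
end

section
/- Given f : ℝ → ℝ with f(r) ≠ 0 for every rational r ∈ [0,1], the function g_f is graph continuous: the graph ℝ × {0} of the zero function is contained in the closure of the graph of g_f. -/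
open Classical in
/-- The function `g_f`: equals `1` at `x` if some rational shift of `x` lands in
`[0,1]` on a zero of `f`, and `0` otherwise. -/
noncomputable def gf (f : ℝ → ℝ) (x : ℝ) : ℝ :=
  if ∃ q : ℚ, x + (q : ℝ) ∈ Set.Icc (0:ℝ) 1 ∧ f (x + (q : ℝ)) = 0 then 1 else 0

/-! `g_f` vanishes on the dense set `ℚ`, because a rational shift of a rational is rational and
`f` has no rational zeros in `[0,1]`. A continuous function agreeing with `h` on a dense set has
its graph in the closure of the graph of `h`, so the zero function witnesses graph continuity. -/

open Set

theorem graph_subset_closure_graph_of_eqOn_dense {X Y : Type*} [TopologicalSpace X]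
    [TopologicalSpace Y] {g h : X → Y} {s : Set X} (hg : Continuous g) (hs : Dense s)
    (hgh : EqOn h g s) :
    {p : X × Y | p.2 = g p.1} ⊆ closure {p : X × Y | p.2 = h p.1} := by
  have hgraph : Continuous fun x => (x, g x) := continuous_id.prodMk hg
  rintro ⟨x, y⟩ (rfl : y = g x)
  have hx : (x, g x) ∈ (fun x => (x, g x)) '' closure s := ⟨x, hs.closure_eq ▸ trivial, rfl⟩
  refine closure_mono ?_ (image_closure_subset_closure_image hgraph hx)
  rintro _ ⟨z, hz, rfl⟩
  exact (hgh hz).symm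

theorem gf_ratCast_eq_zero {f : ℝ → ℝ} (hf : ∀ r : ℚ, (r : ℝ) ∈ Icc (0:ℝ) 1 → f r ≠ 0)
    (q : ℚ) : gf f q = 0 := by
  refine if_neg ?_
  rintro ⟨q', hmem, hzero⟩
  rw [← Rat.cast_add] at hmem hzero
  exact hf (q + q') hmem hzero

theorem gf_graphContinuous (f : ℝ → ℝ)
    (hf : ∀ r : ℚ, (r : ℝ) ∈ Set.Icc (0:ℝ) 1 → f r ≠ 0) :
    ({p : ℝ × ℝ | p.2 = 0} ⊆ closure {p : ℝ × ℝ | p.2 = gf f p.1}) ∧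
      GraphContinuous (gf f) := by
  have hzero : {p : ℝ × ℝ | p.2 = 0} ⊆ closure {p : ℝ × ℝ | p.2 = gf f p.1} :=
    graph_subset_closure_graph_of_eqOn_dense (g := fun _ => 0) continuous_const
      Rat.denseRange_cast (by rintro _ ⟨q, rfl⟩; exact gf_ratCast_eq_zero hf q)
  exact ⟨hzero, 0, continuous_const, hzero⟩
end

section
/- Given f : ℝ → ℝ with f(r) ≠ 0 for every rational r ∈ [0,1], the function g_f satisfies the Young condition at every point: for every x ∈ ℝ there exist sequences (x_n) and (y_n) with x_n < x < y_n for all n, both converging to x, such that g_f(x_n) → g_f(x) and g_f(y_n) → g_f(x). -/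
open Filter Topology

lemma gf_add_rat (f : ℝ → ℝ) (x : ℝ) (q : ℚ) : gf f (x + (q : ℝ)) = gf f x := by
  classical
  unfold gf
  congr 1
  apply propext
  constructor
  · rintro ⟨p, hp⟩
    exact ⟨q + p, by push_cast; rw [← add_assoc]; exact hp⟩
  · rintro ⟨p, hp⟩
    refine ⟨p - q, ?_⟩
    push_cast
    have : x + (q:ℝ) + ((p:ℝ) - q) = x + p := by ring
    rw [this]; exact hp

theorem gf_young_condition (f : ℝ → ℝ)
    (hf : ∀ r : ℚ, (r : ℝ) ∈ Set.Icc (0:ℝ) 1 → f r ≠ 0) :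
    ∀ x : ℝ, ∃ xs ys : ℕ → ℝ,
      (∀ n, xs n < x) ∧ (∀ n, x < ys n) ∧
      Tendsto xs atTop (𝓝 x) ∧ Tendsto ys atTop (𝓝 x) ∧
      Tendsto (fun n => gf f (xs n)) atTop (𝓝 (gf f x)) ∧
      Tendsto (fun n => gf f (ys n)) atTop (𝓝 (gf f x)) := by
  intro x
  refine ⟨fun n => x + ((-(1 / (n+1)) : ℚ) : ℝ), fun n => x + (((1 / (n+1)) : ℚ) : ℝ),
    ?_, ?_, ?_, ?_, ?_, ?_⟩
  · intro n
    have h0 : (0:ℝ) < (((1 / (n+1)) : ℚ) : ℝ) := by push_cast; positivity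
    push_cast at h0 ⊢
    linarith
  · intro n
    have : (0:ℝ) < (((1 / (n+1)) : ℚ) : ℝ) := by push_cast; positivity
    linarith
  · have h : Tendsto (fun n : ℕ => ((-(1 / (n+1)) : ℚ) : ℝ)) atTop (𝓝 0) := by
      have := tendsto_one_div_add_atTop_nhds_zero_nat (𝕜 := ℝ)
      have : Tendsto (fun n : ℕ => -(1 / ((n:ℝ)+1))) atTop (𝓝 0) := by
        simpa using this.neg
      convert this using 2 with n
      push_cast; ring
    simpa using tendsto_const_nhds.add h
  · have h : Tendsto (fun n : ℕ => (((1 / (n+1)) : ℚ) : ℝ)) atTop (𝓝 0) := by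
      have := tendsto_one_div_add_atTop_nhds_zero_nat (𝕜 := ℝ)
      convert this using 2 with n
      push_cast; ring
    simpa using tendsto_const_nhds.add h
  · simp only [gf_add_rat]
    exact tendsto_const_nhds
  · simp only [gf_add_rat]
    exact tendsto_const_nhds
end

section
/- Given f : ℝ → ℝ with f(r) ≠ 0 for every rational r ∈ [0,1], the function g_f is almost continuous in the sense of Husain: for every x ∈ ℝ and every open set G ⊆ ℝ containing g_f(x), the closure of the preimage {y ∈ ℝ : g_f(y) ∈ G} is a neighbourhood of x (in fact it equals ℝ). -/
/-!
`g_f` is invariant under rational translations, so the preimage of any set containing `g_f x`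
contains the dense set `x + ℚ`.
-/

open Topology

theorem gf_add_ratCast (f : ℝ → ℝ) (x : ℝ) (q : ℚ) : gf f (x + q) = gf f x := by
  unfold gf
  congr 1
  refine propext ⟨fun ⟨r, hr⟩ => ⟨q + r, ?_⟩, fun ⟨r, hr⟩ => ⟨r - q, ?_⟩⟩
  · rwa [Rat.cast_add, ← add_assoc]
  · rwa [Rat.cast_sub, add_assoc, add_sub_cancel]

theorem dense_range_add_ratCast (x : ℝ) : Dense (Set.range fun q : ℚ => x + q) :=
  (add_left_surjective x).denseRange.comp Rat.denseRange_cast (continuous_const_add x)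

theorem dense_preimage_of_add_ratCast_eq {α : Type*} {g : ℝ → α}
    (hg : ∀ (x : ℝ) (q : ℚ), g (x + q) = g x) {s : Set α} {x : ℝ} (hx : g x ∈ s) :
    Dense (g ⁻¹' s) :=
  (dense_range_add_ratCast x).mono <| Set.range_subset_iff.2 fun q => by
    simpa only [Set.mem_preimage, hg] using hx

theorem gf_almost_continuous_husain_general (f : ℝ → ℝ) :
    ∀ x : ℝ, ∀ G : Set ℝ, IsOpen G → gf f x ∈ G →
      closure {y : ℝ | gf f y ∈ G} ∈ 𝓝 x ∧
        closure {y : ℝ | gf f y ∈ G} = Set.univ := by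
  intro x G _ hxG
  have hclosure : closure {y : ℝ | gf f y ∈ G} = Set.univ :=
    (dense_preimage_of_add_ratCast_eq (gf_add_ratCast f) hxG).closure_eq
  exact ⟨hclosure ▸ Filter.univ_mem, hclosure⟩

theorem gf_almost_continuous_husain (f : ℝ → ℝ)
    (hf : ∀ r : ℚ, (r : ℝ) ∈ Set.Icc (0:ℝ) 1 → f r ≠ 0) :
    ∀ x : ℝ, ∀ G : Set ℝ, IsOpen G → gf f x ∈ G →
      closure {y : ℝ | gf f y ∈ G} ∈ 𝓝 x ∧
        closure {y : ℝ | gf f y ∈ G} = Set.univ :=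
  gf_almost_continuous_husain_general f
end

section
/- Given f : ℝ → ℝ with f(r) ≠ 0 for every rational r ∈ [0,1]: (i) there exists x ∈ [0,1] with f(x) = 0 if and only if the supremum of g_f over [0,1] equals 1 (and otherwise this supremum equals 0); and (ii) g_f has the intermediate value property on [0,1] — meaning for all a, b ∈ [0,1] with a < b and every y strictly between g_f(a) and g_f(b) there exists c ∈ (a, b) with g_f(c) = y — if and only if f has no zero in [0,1]. -/
open Set

lemma gf_eq_zero_or_eq_one (f : ℝ → ℝ) (x : ℝ) : gf f x = 0 ∨ gf f x = 1 := by
  unfold gf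
  split_ifs <;> simp

section

variable {f : ℝ → ℝ}

lemma gf_eq_one_of_mem_of_eq_zero {x : ℝ} (hx : x ∈ Icc (0:ℝ) 1) (hfx : f x = 0) :
    gf f x = 1 :=
  if_pos ⟨0, by simpa using hx, by simpa using hfx⟩

lemma gf_eq_zero_of_not_exists_zero (h : ¬ ∃ x ∈ Icc (0:ℝ) 1, f x = 0) (x : ℝ) :
    gf f x = 0 :=
  if_neg fun ⟨q, hq, hfq⟩ ↦ h ⟨x + q, hq, hfq⟩

lemma gf_ratCast (hf : ∀ r : ℚ, (r : ℝ) ∈ Icc (0:ℝ) 1 → f r ≠ 0) (r : ℚ) : gf f r = 0 :=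
  if_neg fun ⟨q, hq, hfq⟩ ↦ hf (r + q) (by exact_mod_cast hq) (by exact_mod_cast hfq)

lemma sSup_image_gf_of_exists_zero (h : ∃ x ∈ Icc (0:ℝ) 1, f x = 0) :
    sSup (gf f '' Icc 0 1) = 1 := by
  obtain ⟨x₀, hx₀, hfx₀⟩ := h
  refine IsGreatest.csSup_eq ⟨⟨x₀, hx₀, gf_eq_one_of_mem_of_eq_zero hx₀ hfx₀⟩, ?_⟩
  rintro _ ⟨x, -, rfl⟩
  rcases gf_eq_zero_or_eq_one f x with h | h <;> rw [h]
  exact zero_le_one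

lemma sSup_image_gf_of_not_exists_zero (h : ¬ ∃ x ∈ Icc (0:ℝ) 1, f x = 0) :
    sSup (gf f '' Icc 0 1) = 0 := by
  have himage : gf f '' Icc 0 1 = {0} := by
    rw [image_congr fun x _ ↦ gf_eq_zero_of_not_exists_zero h x]
    exact (nonempty_Icc.mpr zero_le_one).image_const 0
  rw [himage, csSup_singleton]

end

theorem gf_sup_and_ivp (f : ℝ → ℝ)
    (hf : ∀ r : ℚ, (r : ℝ) ∈ Set.Icc (0:ℝ) 1 → f r ≠ 0) :
    ((∃ x ∈ Set.Icc (0:ℝ) 1, f x = 0) ↔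
        sSup (gf f '' Set.Icc (0:ℝ) 1) = 1) ∧
    (¬ (∃ x ∈ Set.Icc (0:ℝ) 1, f x = 0) →
        sSup (gf f '' Set.Icc (0:ℝ) 1) = 0) ∧
    ((∀ a ∈ Set.Icc (0:ℝ) 1, ∀ b ∈ Set.Icc (0:ℝ) 1, a < b →
        ∀ y : ℝ, (gf f a < y ∧ y < gf f b) ∨ (gf f b < y ∧ y < gf f a) →
          ∃ c ∈ Set.Ioo a b, gf f c = y) ↔
      ¬ (∃ x ∈ Set.Icc (0:ℝ) 1, f x = 0)) := by
  refine ⟨⟨sSup_image_gf_of_exists_zero, fun hsup ↦ ?_⟩, sSup_image_gf_of_not_exists_zero, ?_, ?_⟩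
  · by_contra h
    rw [sSup_image_gf_of_not_exists_zero h] at hsup
    exact zero_ne_one hsup
  · rintro hivp ⟨x₀, hx₀, hfx₀⟩
    have hgf0 : gf f 0 = 0 := by exact_mod_cast gf_ratCast hf 0
    have hgfx₀ : gf f x₀ = 1 := gf_eq_one_of_mem_of_eq_zero hx₀ hfx₀
    have hx₀pos : 0 < x₀ :=
      hx₀.1.lt_of_ne fun h ↦ by rw [← h, hgf0] at hgfx₀; exact zero_ne_one hgfx₀
    obtain ⟨c, -, hc⟩ := hivp 0 (left_mem_Icc.mpr zero_le_one) x₀ hx₀ hx₀pos (1 / 2)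
      (Or.inl ⟨by rw [hgf0]; norm_num, by rw [hgfx₀]; norm_num⟩)
    rcases gf_eq_zero_or_eq_one f c with h | h <;> rw [h] at hc <;> norm_num at hc
  · intro h a _ b _ _ y hy
    rw [gf_eq_zero_of_not_exists_zero h a, gf_eq_zero_of_not_exists_zero h b] at hy
    rcases hy with ⟨h1, h2⟩ | ⟨h1, h2⟩ <;> linarith
end
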